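/- arXiv:1906.05566 — 7 statements merged into one kernel-verified Lean document; each statement's English description precedes it below -/
import Mathlib

section
/- Let q₀ and q₁ be probability density functions on a measure space (S, ν) with squared Hellinger distance h²(q₀,q₁) = 1 − cos α for some α ∈ (0, π/2), and let λ ∈ (0, 1/4). Define q₂ = ((sin((1−λ)α)/sin α)·√q₁ + (sin(λα)/sin α)·√q₀)². Then q₂ is a probability density function, i.e. q₂ ≥ 0 and ∫ q₂ dν = 1. -/
/-!
In `L²(ν)` the functions `u = √q₀` and `v = √q₁` are unit vectors with `⟪u, v⟫ = 1 - h² = cos α`,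
so they span an angle `α`, and `√q₂ = a v + b u` is their spherical interpolation at parameter `λ`.
Its squared norm `a² + b² + 2ab cos α` equals `1` by the angle-addition identity
`sin² x + sin² y + 2 sin x sin y cos (x + y) = sin² (x + y)`.
-/

open MeasureTheory Real

theorem Real.sin_sq_add_sin_sq_add_two_mul_sin_mul_sin_mul_cos_add (x y : ℝ) :
    sin x ^ 2 + sin y ^ 2 + 2 * sin x * sin y * cos (x + y) = sin (x + y) ^ 2 := by
  rw [sin_add, cos_add]
  linear_combination (-sin x ^ 2) * sin_sq_add_cos_sq y - sin y ^ 2 * sin_sq_add_cos_sq x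

namespace MeasureTheory

variable {S : Type*} [MeasurableSpace S] {ν : Measure S} {f g : S → ℝ}

theorem Integrable.sqrt_mul_sqrt (hf : Integrable f ν) (hg : Integrable g ν) :
    Integrable (fun s => √(f s) * √(g s)) ν := by
  refine ((hf.norm.add hg.norm).div_const 2).mono'
    (hf.aemeasurable.sqrt.mul hg.aemeasurable.sqrt).aestronglyMeasurable
    (ae_of_all _ fun s => ?_)
  have hf' : √(f s) ^ 2 ≤ ‖f s‖ :=
    sq_sqrt' (x := f s) ▸ max_le (le_abs_self _) (abs_nonneg _)
  have hg' : √(g s) ^ 2 ≤ ‖g s‖ :=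
    sq_sqrt' (x := g s) ▸ max_le (le_abs_self _) (abs_nonneg _)
  rw [norm_of_nonneg (by positivity), Pi.add_apply]
  nlinarith [sq_nonneg (√(f s) - √(g s))]

theorem integral_mul_sqrt_add_mul_sqrt_sq (hf0 : 0 ≤ᵐ[ν] f) (hg0 : 0 ≤ᵐ[ν] g)
    (hf : Integrable f ν) (hg : Integrable g ν) (a b : ℝ) :
    ∫ s, (a * √(f s) + b * √(g s)) ^ 2 ∂ν = a ^ 2 * ∫ s, f s ∂ν + b ^ 2 * ∫ s, g s ∂ν
      + 2 * a * b * ∫ s, √(f s) * √(g s) ∂ν := by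
  have hexpand : (fun s => (a * √(f s) + b * √(g s)) ^ 2) =ᵐ[ν]
      fun s => a ^ 2 * f s + b ^ 2 * g s + 2 * a * b * (√(f s) * √(g s)) := by
    filter_upwards [hf0, hg0] with s hfs hgs
    linear_combination a ^ 2 * sq_sqrt hfs + b ^ 2 * sq_sqrt hgs
  have hf' := hf.const_mul (a ^ 2)
  have hg' := hg.const_mul (b ^ 2)
  have hfg' : Integrable (fun s => a ^ 2 * f s + b ^ 2 * g s) ν := hf'.add hg'
  rw [integral_congr_ae hexpand, integral_add hfg' ((hf.sqrt_mul_sqrt hg).const_mul _),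
    integral_add hf' hg', integral_const_mul, integral_const_mul, integral_const_mul]

theorem integral_sqrt_mul_sqrt_eq_one_sub_hellinger (hf0 : 0 ≤ᵐ[ν] f) (hg0 : 0 ≤ᵐ[ν] g)
    (hf : Integrable f ν) (hg : Integrable g ν) (hf1 : ∫ s, f s ∂ν = 1)
    (hg1 : ∫ s, g s ∂ν = 1) :
    ∫ s, √(f s) * √(g s) ∂ν = 1 - (1 / 2) * ∫ s, (√(f s) - √(g s)) ^ 2 ∂ν := by
  have h := integral_mul_sqrt_add_mul_sqrt_sq hf0 hg0 hf hg 1 (-1)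
  simp only [one_mul, neg_one_mul, ← sub_eq_add_neg, hf1, hg1] at h
  linarith

end MeasureTheory

theorem least_favorable_density_is_density_general
    {S : Type*} [MeasurableSpace S] (ν : Measure S)
    (q0 q1 : S → ℝ)
    (h0 : ∀ s, 0 ≤ q0 s) (h1 : ∀ s, 0 ≤ q1 s)
    (hi0 : Integrable q0 ν) (hi1 : Integrable q1 ν)
    (hm0 : ∫ s, q0 s ∂ν = 1) (hm1 : ∫ s, q1 s ∂ν = 1)
    (α l : ℝ) (hα : α ∈ Set.Ioo 0 (π / 2))
    (hHell : (1 / 2) * ∫ s, (Real.sqrt (q0 s) - Real.sqrt (q1 s)) ^ 2 ∂ν = 1 - Real.cos α)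
    (q2 : S → ℝ)
    (hq2 : q2 = fun s =>
      (Real.sin ((1 - l) * α) / Real.sin α * Real.sqrt (q1 s)
        + Real.sin (l * α) / Real.sin α * Real.sqrt (q0 s)) ^ 2) :
    (∀ s, 0 ≤ q2 s) ∧ ∫ s, q2 s ∂ν = 1 := by
  have hsin : sin α ≠ 0 :=
    (sin_pos_of_pos_of_lt_pi hα.1 (by linarith [hα.2, pi_pos])).ne'
  have haffinity : ∫ s, √(q1 s) * √(q0 s) ∂ν = cos α := by
    rw [integral_sqrt_mul_sqrt_eq_one_sub_hellinger (ae_of_all _ h1) (ae_of_all _ h0) hi1 hi0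
      hm1 hm0]
    simp_rw [← neg_sub (√(q0 _)), neg_sq]
    linarith
  refine ⟨fun s => hq2 ▸ sq_nonneg _, ?_⟩
  rw [hq2, integral_mul_sqrt_add_mul_sqrt_sq (ae_of_all _ h1) (ae_of_all _ h0) hi1 hi0,
    hm0, hm1, haffinity]
  have hangle := sin_sq_add_sin_sq_add_two_mul_sin_mul_sin_mul_cos_add ((1 - l) * α) (l * α)
  rw [show (1 - l) * α + l * α = α by ring] at hangle
  field_simp
  linear_combination hangle

/-- If `h²(q₀,q₁) = 1 - cos α` and `q₂ = ((sin((1-λ)α)/sin α)√q₁ + (sin(λα)/sin α)√q₀)²`,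
then `q₂` is a probability density. -/
theorem least_favorable_density_is_density
    {S : Type*} [MeasurableSpace S] (ν : Measure S)
    (q0 q1 : S → ℝ)
    (h0 : ∀ s, 0 ≤ q0 s) (h1 : ∀ s, 0 ≤ q1 s)
    (hi0 : Integrable q0 ν) (hi1 : Integrable q1 ν)
    (hm0 : ∫ s, q0 s ∂ν = 1) (hm1 : ∫ s, q1 s ∂ν = 1)
    (α l : ℝ) (hα : α ∈ Set.Ioo 0 (π / 2)) (hl : l ∈ Set.Ioo 0 (1 / 4 : ℝ))
    (hHell : (1 / 2) * ∫ s, (Real.sqrt (q0 s) - Real.sqrt (q1 s)) ^ 2 ∂ν = 1 - Real.cos α)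
    (q2 : S → ℝ)
    (hq2 : q2 = fun s =>
      (Real.sin ((1 - l) * α) / Real.sin α * Real.sqrt (q1 s)
        + Real.sin (l * α) / Real.sin α * Real.sqrt (q0 s)) ^ 2) :
    (∀ s, 0 ≤ q2 s) ∧ ∫ s, q2 s ∂ν = 1 :=
  least_favorable_density_is_density_general ν q0 q1 h0 h1 hi0 hi1 hm0 hm1 α l hα hHell q2 hq2
end

section
/- Let q₀, q₁ be probability densities on (S, ν) with h²(q₀,q₁) = 1 − cos α, α ∈ (0, π/2), λ ∈ (0, 1/4), and q₂ = ((sin((1−λ)α)/sin α)·√q₁ + (sin(λα)/sin α)·√q₀)². Then h²(q₁,q₂) = 1 − cos(λα) and h²(q₀,q₂) = 1 − cos((1−λ)α). -/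
/-!
The square roots `√q₀`, `√q₁` are unit vectors of `L²(ν)` at angle `α`, since the Hellinger
affinity `∫ √q₀ √q₁` equals `cos α`, and `√q₂` is their spherical interpolation: the vector of
the arc from `√q₁` to `√q₀` at angle `λα` from `√q₁`. Hence `q₂` is again a density and its
affinities with `q₁` and `q₀` are `cos (λα)` and `cos ((1 - λ)α)`.
-/

open MeasureTheory Real

section Slerp

variable {α β : ℝ}

lemma sin_sub_div_add_sin_div_mul_cos (hα : sin α ≠ 0) :
    sin (α - β) / sin α + sin β / sin α * cos α = cos β := by
  rw [sin_sub]
  field_simp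
  ring

lemma sin_sub_div_mul_cos_add_sin_div (hα : sin α ≠ 0) :
    sin (α - β) / sin α * cos α + sin β / sin α = cos (α - β) := by
  simpa only [add_comm, sub_sub_cancel] using sin_sub_div_add_sin_div_mul_cos (β := α - β) hα

lemma sin_sub_div_sq_add_sin_div_sq (hα : sin α ≠ 0) :
    (sin (α - β) / sin α) ^ 2 + (sin β / sin α) ^ 2
      + 2 * (sin (α - β) / sin α) * (sin β / sin α) * cos α = 1 := by
  rw [sin_sub]
  field_simp
  linear_combination (-(sin β ^ 2)) * sin_sq_add_cos_sq α + sin α ^ 2 * sin_sq_add_cos_sq β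

lemma sin_div_sin_nonneg (hβ0 : 0 ≤ β) (hβα : β ≤ α) (hαπ : α < π) : 0 ≤ sin β / sin α :=
  div_nonneg (sin_nonneg_of_nonneg_of_le_pi hβ0 (by linarith))
    (sin_nonneg_of_nonneg_of_le_pi (by linarith) hαπ.le)

end Slerp

lemma sq_mul_sqrt_add_mul_sqrt {x y : ℝ} (a b : ℝ) (hx : 0 ≤ x) (hy : 0 ≤ y) :
    (a * √x + b * √y) ^ 2 = a ^ 2 * x + b ^ 2 * y + 2 * a * b * (√x * √y) := by
  linear_combination a ^ 2 * sq_sqrt hx + b ^ 2 * sq_sqrt hy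

section Integrals

variable {S : Type*} [MeasurableSpace S] {ν : Measure S} {f g : S → ℝ}

lemma integrable_sqrt_mul_sqrt (hf0 : ∀ s, 0 ≤ f s) (hg0 : ∀ s, 0 ≤ g s)
    (hf : Integrable f ν) (hg : Integrable g ν) :
    Integrable (fun s => √(f s) * √(g s)) ν := by
  refine (hf.add hg).mono' ?_ (ae_of_all _ fun s => ?_)
  · exact (continuous_sqrt.comp_aestronglyMeasurable hf.aestronglyMeasurable).mul
      (continuous_sqrt.comp_aestronglyMeasurable hg.aestronglyMeasurable)
  · rw [norm_of_nonneg (by positivity), Pi.add_apply]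
    nlinarith [sq_nonneg (√(f s) - √(g s)), sq_sqrt (hf0 s), sq_sqrt (hg0 s)]

lemma half_integral_sqrt_sub_sqrt_sq (hf0 : ∀ s, 0 ≤ f s) (hg0 : ∀ s, 0 ≤ g s)
    (hf : Integrable f ν) (hg : Integrable g ν) :
    (1 / 2) * ∫ s, (√(f s) - √(g s)) ^ 2 ∂ν
      = (∫ s, f s ∂ν + ∫ s, g s ∂ν) / 2 - ∫ s, √(f s) * √(g s) ∂ν := by
  have hpt : ∀ s, (√(f s) - √(g s)) ^ 2 = f s + g s - 2 * (√(f s) * √(g s)) := fun s => by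
    linear_combination sq_sqrt (hf0 s) + sq_sqrt (hg0 s)
  simp_rw [hpt]
  rw [integral_sub (by exact hf.add hg) ((integrable_sqrt_mul_sqrt hf0 hg0 hf hg).const_mul 2),
    integral_add hf hg, integral_const_mul]
  ring

lemma integrable_sq_mul_sqrt_add_mul_sqrt (a b : ℝ) (hf0 : ∀ s, 0 ≤ f s) (hg0 : ∀ s, 0 ≤ g s)
    (hf : Integrable f ν) (hg : Integrable g ν) :
    Integrable (fun s => (a * √(f s) + b * √(g s)) ^ 2) ν := by
  simp_rw [sq_mul_sqrt_add_mul_sqrt a b (hf0 _) (hg0 _)]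
  exact ((hf.const_mul _).add (hg.const_mul _)).add
    ((integrable_sqrt_mul_sqrt hf0 hg0 hf hg).const_mul _)

lemma integral_sq_mul_sqrt_add_mul_sqrt (a b : ℝ) (hf0 : ∀ s, 0 ≤ f s) (hg0 : ∀ s, 0 ≤ g s)
    (hf : Integrable f ν) (hg : Integrable g ν) :
    ∫ s, (a * √(f s) + b * √(g s)) ^ 2 ∂ν
      = a ^ 2 * ∫ s, f s ∂ν + b ^ 2 * ∫ s, g s ∂ν
        + 2 * a * b * ∫ s, √(f s) * √(g s) ∂ν := by
  simp_rw [sq_mul_sqrt_add_mul_sqrt a b (hf0 _) (hg0 _)]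
  rw [integral_add (by exact (hf.const_mul _).add (hg.const_mul _))
      ((integrable_sqrt_mul_sqrt hf0 hg0 hf hg).const_mul _),
    integral_add (hf.const_mul _) (hg.const_mul _),
    integral_const_mul, integral_const_mul, integral_const_mul]

lemma integral_sqrt_mul_add (a b : ℝ) (hf0 : ∀ s, 0 ≤ f s) (hg0 : ∀ s, 0 ≤ g s)
    (hf : Integrable f ν) (hg : Integrable g ν) :
    ∫ s, √(f s) * (a * √(f s) + b * √(g s)) ∂ν
      = a * ∫ s, f s ∂ν + b * ∫ s, √(f s) * √(g s) ∂ν := by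
  simp_rw [mul_add, mul_left_comm (√(f _)), mul_self_sqrt (hf0 _)]
  rw [integral_add (hf.const_mul a) ((integrable_sqrt_mul_sqrt hf0 hg0 hf hg).const_mul b),
    integral_const_mul, integral_const_mul]

end Integrals

/-- Hellinger distances of the least favorable density:
`h²(q₁,q₂) = 1 - cos(λα)` and `h²(q₀,q₂) = 1 - cos((1-λ)α)`. -/
theorem hellinger_least_favorable_density
    {S : Type*} [MeasurableSpace S] (ν : Measure S)
    (q0 q1 : S → ℝ)
    (h0 : ∀ s, 0 ≤ q0 s) (h1 : ∀ s, 0 ≤ q1 s)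
    (hi0 : Integrable q0 ν) (hi1 : Integrable q1 ν)
    (hm0 : ∫ s, q0 s ∂ν = 1) (hm1 : ∫ s, q1 s ∂ν = 1)
    (α l : ℝ) (hα : α ∈ Set.Ioo 0 (π / 2)) (hl : l ∈ Set.Ioo 0 (1 / 4 : ℝ))
    (hHell : (1 / 2) * ∫ s, (Real.sqrt (q0 s) - Real.sqrt (q1 s)) ^ 2 ∂ν = 1 - Real.cos α)
    (q2 : S → ℝ)
    (hq2 : q2 = fun s =>
      (Real.sin ((1 - l) * α) / Real.sin α * Real.sqrt (q1 s)
        + Real.sin (l * α) / Real.sin α * Real.sqrt (q0 s)) ^ 2) :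
    (1 / 2) * (∫ s, (Real.sqrt (q1 s) - Real.sqrt (q2 s)) ^ 2 ∂ν) = 1 - Real.cos (l * α) ∧
    (1 / 2) * (∫ s, (Real.sqrt (q0 s) - Real.sqrt (q2 s)) ^ 2 ∂ν) = 1 - Real.cos ((1 - l) * α) := by
  obtain ⟨hα0, hαπ⟩ := hα
  obtain ⟨hl0, hl1⟩ := hl
  have hsin : sin α ≠ 0 := (sin_pos_of_pos_of_lt_pi hα0 (by linarith [pi_pos])).ne'
  have hsub : α - l * α = (1 - l) * α := by ring
  set a := sin ((1 - l) * α) / sin α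
  set b := sin (l * α) / sin α
  have ha : 0 ≤ a := sin_div_sin_nonneg (by nlinarith) (by nlinarith) (by linarith [pi_pos])
  have hb : 0 ≤ b := sin_div_sin_nonneg (by nlinarith) (by nlinarith) (by linarith [pi_pos])
  have h2 : ∀ s, 0 ≤ q2 s := fun s => by rw [hq2]; positivity
  have hsqrt2 : ∀ s, √(q2 s) = a * √(q1 s) + b * √(q0 s) := fun s => by
    rw [hq2]; exact sqrt_sq (by positivity)
  have hcos : ∫ s, √(q0 s) * √(q1 s) ∂ν = cos α := by
    rw [half_integral_sqrt_sub_sqrt_sq h0 h1 hi0 hi1, hm0, hm1] at hHell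
    linarith
  have hcos' : ∫ s, √(q1 s) * √(q0 s) ∂ν = cos α := by simpa only [mul_comm] using hcos
  have hi2 : Integrable q2 ν := by
    rw [hq2]; exact integrable_sq_mul_sqrt_add_mul_sqrt a b h1 h0 hi1 hi0
  have hm2 : ∫ s, q2 s ∂ν = 1 := by
    simp only [hq2]
    rw [integral_sq_mul_sqrt_add_mul_sqrt a b h1 h0 hi1 hi0, hm1, hm0, hcos']
    simpa only [hsub, mul_one] using sin_sub_div_sq_add_sin_div_sq (β := l * α) hsin
  have haff1 : ∫ s, √(q1 s) * √(q2 s) ∂ν = cos (l * α) := by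
    simp_rw [hsqrt2]
    rw [integral_sqrt_mul_add a b h1 h0 hi1 hi0, hm1, hcos']
    simpa only [hsub, mul_one] using sin_sub_div_add_sin_div_mul_cos (β := l * α) hsin
  have haff0 : ∫ s, √(q0 s) * √(q2 s) ∂ν = cos ((1 - l) * α) := by
    simp_rw [hsqrt2, add_comm (a * _)]
    rw [integral_sqrt_mul_add b a h0 h1 hi0 hi1, hm0, hcos]
    simpa only [hsub, mul_one, add_comm] using sin_sub_div_mul_cos_add_sin_div (β := l * α) hsin
  constructor
  · rw [half_integral_sqrt_sub_sqrt_sq h1 h2 hi1 hi2, hm1, hm2, haff1]; norm_num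
  · rw [half_integral_sqrt_sub_sqrt_sq h0 h2 hi0 hi2, hm0, hm2, haff0]; norm_num
end

section
/- Let q₀, q₁ be probability densities on (S,ν) with h²(q₀,q₁) = 1 − cos α for α ∈ (0, π/2), λ ∈ (0,1/4), and q₂ as above. Then λ² h²(q₀,q₁) ≤ h²(q₁,q₂) ≤ h²(q₀,q₁) and (1−λ)² h²(q₀,q₁) ≤ h²(q₀,q₂). -/
/-!
The functions `f = √q₀` and `g = √q₁` are unit vectors of `L²(ν)` with `h²(q₀, q₁) = 1 - ⟨f, g⟩`,
so they make the angle `α`. The function `√q₂ = (sin ((1-λ)α) g + sin (λα) f) / sin α` is the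
point at angle `λα` from `g` on the great circle through `g` and `f`, whence
`h²(q₁, q₂) = 1 - cos (λα)` and `h²(q₀, q₂) = 1 - cos ((1-λ)α)`. The bounds then follow from the
monotonicity of `cos` on `[0, π]` and from `t² (1 - cos x) ≤ 1 - cos (t x)`, which is
`t sin (x/2) ≤ sin (t x/2)`, i.e. concavity of `sin` on `[0, π]`.
-/

open MeasureTheory Real

theorem mul_sin_le_sin_mul {x t : ℝ} (hx₀ : 0 ≤ x) (hxπ : x ≤ π) (ht₀ : 0 ≤ t) (ht₁ : t ≤ 1) :
    t * sin x ≤ sin (t * x) := by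
  simpa using strictConcaveOn_sin_Icc.concaveOn.2 (Set.left_mem_Icc.2 pi_pos.le) ⟨hx₀, hxπ⟩
    (sub_nonneg.2 ht₁) ht₀ (sub_add_cancel 1 t)

theorem sq_mul_one_sub_cos_le {x t : ℝ} (hx₀ : 0 ≤ x) (hxπ : x ≤ 2 * π) (ht₀ : 0 ≤ t)
    (ht₁ : t ≤ 1) : t ^ 2 * (1 - cos x) ≤ 1 - cos (t * x) := by
  have one_sub_cos : ∀ y, 1 - cos y = 2 * sin (y / 2) ^ 2 := fun y => by
    rw [sin_sq_eq_half_sub, mul_div_cancel₀ y two_ne_zero]; ring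
  have hsin := mul_sin_le_sin_mul (x := x / 2) (by linarith) (by linarith) ht₀ ht₁
  have hnn : 0 ≤ t * sin (x / 2) :=
    mul_nonneg ht₀ (sin_nonneg_of_nonneg_of_le_pi (by linarith) (by linarith))
  rw [one_sub_cos, one_sub_cos, mul_div_assoc]
  nlinarith [pow_le_pow_left₀ hnn hsin 2]

theorem slerp_chord_sq {α : ℝ} (hα : sin α ≠ 0) (t : ℝ) :
    (sin t / sin α) ^ 2 + (1 - sin (α - t) / sin α) ^ 2
      - 2 * (sin t / sin α) * (1 - sin (α - t) / sin α) * cos α = 2 * (1 - cos t) := by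
  rw [sin_sub]
  field_simp
  linear_combination sin α ^ 2 * sin_sq_add_cos_sq t - sin t ^ 2 * sin_sq_add_cos_sq α

section
variable {S : Type*} [MeasurableSpace S] {ν : Measure S}

theorem integrable_sqrt_mul_sqrt_s3 {p q : S → ℝ} (hp : Integrable p ν) (hq : Integrable q ν) :
    Integrable (fun s => √(p s) * √(q s)) ν := by
  refine ((hp.norm.add hq.norm).div_const 2).mono'
    ((continuous_sqrt.comp_aestronglyMeasurable hp.1).mul
      (continuous_sqrt.comp_aestronglyMeasurable hq.1)) (ae_of_all _ fun s => ?_)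
  have hle := mul_le_mul (sqrt_le_sqrt (le_abs_self (p s))) (sqrt_le_sqrt (le_abs_self (q s)))
    (sqrt_nonneg _) (sqrt_nonneg _)
  rw [norm_mul, norm_of_nonneg (sqrt_nonneg _), norm_of_nonneg (sqrt_nonneg _)]
  simp only [Pi.add_apply, norm_eq_abs]
  nlinarith [sq_sqrt (abs_nonneg (p s)), sq_sqrt (abs_nonneg (q s)),
    sq_nonneg (√|p s| - √|q s|)]

theorem integral_mul_add_mul_sq {f g : S → ℝ} (hf : Integrable (fun s => f s ^ 2) ν)
    (hg : Integrable (fun s => g s ^ 2) ν) (hfg : Integrable (fun s => f s * g s) ν) (c d : ℝ) :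
    ∫ s, (c * f s + d * g s) ^ 2 ∂ν
      = c ^ 2 * ∫ s, f s ^ 2 ∂ν + d ^ 2 * ∫ s, g s ^ 2 ∂ν
        + 2 * c * d * ∫ s, f s * g s ∂ν := by
  have hexpand : (fun s => (c * f s + d * g s) ^ 2)
      = fun s => c ^ 2 * f s ^ 2 + 2 * c * d * (f s * g s) + d ^ 2 * g s ^ 2 := by
    ext s; ring
  rw [hexpand, integral_add ?_ (hg.const_mul _), integral_add (hf.const_mul _) (hfg.const_mul _),
    integral_const_mul, integral_const_mul, integral_const_mul]
  · ring
  · exact (hf.const_mul _).add (hfg.const_mul _)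

theorem half_integral_sub_sq {f g : S → ℝ} (hf : Integrable (fun s => f s ^ 2) ν)
    (hg : Integrable (fun s => g s ^ 2) ν) (hfg : Integrable (fun s => f s * g s) ν)
    (hf₁ : ∫ s, f s ^ 2 ∂ν = 1) (hg₁ : ∫ s, g s ^ 2 ∂ν = 1) :
    (1 / 2) * ∫ s, (f s - g s) ^ 2 ∂ν = 1 - ∫ s, f s * g s ∂ν := by
  have hrw : (fun s => (f s - g s) ^ 2) = fun s => (1 * f s + -1 * g s) ^ 2 := by
    ext s; ring
  rw [hrw, integral_mul_add_mul_sq hf hg hfg, hf₁, hg₁]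
  ring

theorem half_integral_sub_slerp_sq {f g : S → ℝ} (hf : Integrable (fun s => f s ^ 2) ν)
    (hg : Integrable (fun s => g s ^ 2) ν) (hfg : Integrable (fun s => f s * g s) ν)
    (hf₁ : ∫ s, f s ^ 2 ∂ν = 1) (hg₁ : ∫ s, g s ^ 2 ∂ν = 1) {α : ℝ}
    (hcos : ∫ s, f s * g s ∂ν = cos α) (hα : sin α ≠ 0) (t : ℝ) :
    (1 / 2) * ∫ s, (g s - (sin (α - t) / sin α * g s + sin t / sin α * f s)) ^ 2 ∂ν
      = 1 - cos t := by
  have hrw : (fun s => (g s - (sin (α - t) / sin α * g s + sin t / sin α * f s)) ^ 2)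
      = fun s => (-(sin t / sin α) * f s + (1 - sin (α - t) / sin α) * g s) ^ 2 := by
    ext s; ring
  rw [hrw, integral_mul_add_mul_sq hf hg hfg, hf₁, hg₁, hcos]
  linear_combination (1 / 2) * slerp_chord_sq hα t
end

/-- Comparison of Hellinger distances:
`λ² h²(q₀,q₁) ≤ h²(q₁,q₂) ≤ h²(q₀,q₁)` and `(1-λ)² h²(q₀,q₁) ≤ h²(q₀,q₂)`. -/
theorem hellinger_least_favorable_comparison
    {S : Type*} [MeasurableSpace S] (ν : Measure S)
    (q0 q1 : S → ℝ)
    (h0 : ∀ s, 0 ≤ q0 s) (h1 : ∀ s, 0 ≤ q1 s)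
    (hi0 : Integrable q0 ν) (hi1 : Integrable q1 ν)
    (hm0 : ∫ s, q0 s ∂ν = 1) (hm1 : ∫ s, q1 s ∂ν = 1)
    (α l : ℝ) (hα : α ∈ Set.Ioo 0 (π / 2)) (hl : l ∈ Set.Ioo 0 (1 / 4 : ℝ))
    (hHell : (1 / 2) * ∫ s, (Real.sqrt (q0 s) - Real.sqrt (q1 s)) ^ 2 ∂ν = 1 - Real.cos α)
    (q2 : S → ℝ)
    (hq2 : q2 = fun s =>
      (Real.sin ((1 - l) * α) / Real.sin α * Real.sqrt (q1 s)
        + Real.sin (l * α) / Real.sin α * Real.sqrt (q0 s)) ^ 2) :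
    (l ^ 2 * ((1 / 2) * ∫ s, (Real.sqrt (q0 s) - Real.sqrt (q1 s)) ^ 2 ∂ν)
        ≤ (1 / 2) * ∫ s, (Real.sqrt (q1 s) - Real.sqrt (q2 s)) ^ 2 ∂ν) ∧
    ((1 / 2) * (∫ s, (Real.sqrt (q1 s) - Real.sqrt (q2 s)) ^ 2 ∂ν)
        ≤ (1 / 2) * ∫ s, (Real.sqrt (q0 s) - Real.sqrt (q1 s)) ^ 2 ∂ν) ∧
    ((1 - l) ^ 2 * ((1 / 2) * ∫ s, (Real.sqrt (q0 s) - Real.sqrt (q1 s)) ^ 2 ∂ν)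
        ≤ (1 / 2) * ∫ s, (Real.sqrt (q0 s) - Real.sqrt (q2 s)) ^ 2 ∂ν) := by
  obtain ⟨hα₀, hα₁⟩ := hα
  obtain ⟨hl₀, hl₁⟩ := hl
  have hαπ : α < π := by linarith [pi_pos]
  have hsq0 : (fun s => √(q0 s) ^ 2) = q0 := funext fun s => sq_sqrt (h0 s)
  have hsq1 : (fun s => √(q1 s) ^ 2) = q1 := funext fun s => sq_sqrt (h1 s)
  have hf : Integrable (fun s => √(q0 s) ^ 2) ν := by rwa [hsq0]
  have hg : Integrable (fun s => √(q1 s) ^ 2) ν := by rwa [hsq1]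
  have hf₁ : ∫ s, √(q0 s) ^ 2 ∂ν = 1 := by rwa [hsq0]
  have hg₁ : ∫ s, √(q1 s) ^ 2 ∂ν = 1 := by rwa [hsq1]
  have hcos : ∫ s, √(q0 s) * √(q1 s) ∂ν = cos α := by
    linarith [half_integral_sub_sq hf hg (integrable_sqrt_mul_sqrt_s3 hi0 hi1) hf₁ hg₁]
  have hcos' : ∫ s, √(q1 s) * √(q0 s) ∂ν = cos α :=
    (integral_congr_ae (ae_of_all _ fun s => mul_comm _ _)).trans hcos
  have hsin : 0 < sin α := sin_pos_of_pos_of_lt_pi hα₀ hαπ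
  have hsqrt2 : ∀ s, √(q2 s)
      = sin ((1 - l) * α) / sin α * √(q1 s) + sin (l * α) / sin α * √(q0 s) := fun s => by
    have hsl : 0 < sin (l * α) := sin_pos_of_pos_of_lt_pi (by positivity) (by nlinarith)
    have hsl' : 0 < sin ((1 - l) * α) :=
      sin_pos_of_pos_of_lt_pi (mul_pos (by linarith) hα₀) (by nlinarith)
    rw [hq2, sqrt_sq (by positivity)]
  have hv1 : (1 / 2) * ∫ s, (√(q1 s) - √(q2 s)) ^ 2 ∂ν = 1 - cos (l * α) := by
    rw [← half_integral_sub_slerp_sq hf hg (integrable_sqrt_mul_sqrt_s3 hi0 hi1) hf₁ hg₁ hcos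
      hsin.ne' (l * α)]
    simp_rw [hsqrt2, show (1 - l) * α = α - l * α by ring]
  have hv0 : (1 / 2) * ∫ s, (√(q0 s) - √(q2 s)) ^ 2 ∂ν = 1 - cos ((1 - l) * α) := by
    rw [← half_integral_sub_slerp_sq hg hf (integrable_sqrt_mul_sqrt_s3 hi1 hi0) hg₁ hf₁ hcos'
      hsin.ne' ((1 - l) * α)]
    simp_rw [hsqrt2, show α - (1 - l) * α = l * α by ring, add_comm]
  rw [hHell, hv1, hv0]
  refine ⟨sq_mul_one_sub_cos_le hα₀.le (by linarith) hl₀.le (by linarith), ?_,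
    sq_mul_one_sub_cos_le hα₀.le (by linarith) (by linarith) (by linarith)⟩
  linarith [cos_le_cos_of_nonneg_of_le_pi (by positivity) hαπ.le
    (mul_le_of_le_one_left hα₀.le (by linarith) : l * α ≤ α)]
end

section
/- For all λ ∈ (0, 1/4) and all α ∈ (0, π/2): cos(α)/cos(λα) ≤ 1 − (1 − 2λ/(1−λ))·(1 − cos α). -/
open Real

/-- For `λ ∈ (0,1/4)` and `α ∈ (0,π/2)`:
`cos α / cos(λα) ≤ 1 - (1 - 2λ/(1-λ))(1 - cos α)`. -/
theorem cos_div_cos_le (l α : ℝ) (hl : l ∈ Set.Ioo (0 : ℝ) (1 / 4))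
    (hα : α ∈ Set.Ioo 0 (π / 2)) :
    Real.cos α / Real.cos (l * α) ≤ 1 - (1 - 2 * l / (1 - l)) * (1 - Real.cos α) := by
  obtain ⟨hl0, hl4⟩ := hl
  obtain ⟨hα0, hα2⟩ := hα
  have hπ : π ≤ 4 := pi_le_four
  have hπ0 : 0 < π := pi_pos
  have hlα0 : 0 < l * α := mul_pos hl0 hα0
  have hlαα : l * α < α := by nlinarith
  have hcosl : 0 < Real.cos (l * α) :=
    Real.cos_pos_of_mem_Ioo ⟨by linarith, by linarith⟩
  have hcosα : 0 < Real.cos α :=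
    Real.cos_pos_of_mem_Ioo ⟨by linarith, hα2⟩
  have hle : Real.cos α ≤ Real.cos (l * α) :=
    Real.cos_le_cos_of_nonneg_of_le_pi hlα0.le (by linarith) hlαα.le
  -- Step 1: cos α / cos (lα) ≤ cos α + (1 - cos (lα))
  have h1 : Real.cos α / Real.cos (l * α) ≤ Real.cos α + (1 - Real.cos (l * α)) := by
    rw [div_le_iff₀ hcosl]
    nlinarith [Real.cos_le_one (l * α)]
  -- Step 2: 1 - cos (lα) ≤ (lα)^2 / 2
  have h2 : 1 - Real.cos (l * α) ≤ (l * α) ^ 2 / 2 := by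
    have := Real.one_sub_sq_div_two_le_cos (x := l * α)
    linarith
  -- Step 3: 2/π^2 * α^2 ≤ 1 - cos α
  have h3 : 2 / π ^ 2 * α ^ 2 ≤ 1 - Real.cos α := by
    have := Real.cos_le_one_sub_mul_cos_sq (x := α) (by rw [abs_of_pos hα0]; linarith)
    linarith
  -- Step 4: (lα)^2/2 ≤ (2l/(1-l)) * (2/π^2 * α^2)
  have h4 : (l * α) ^ 2 / 2 ≤ 2 * l / (1 - l) * (2 / π ^ 2 * α ^ 2) := by
    have hden : (0:ℝ) < 1 - l := by linarith
    have hpi2 : (0:ℝ) < π ^ 2 := by positivity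
    have heq : 2 * l / (1 - l) * (2 / π ^ 2 * α ^ 2) = 4 * l * α ^ 2 / ((1 - l) * π ^ 2) := by
      field_simp; ring
    rw [heq, div_le_div_iff₀ two_pos (mul_pos hden hpi2)]
    have hπsq : π ^ 2 ≤ 16 := by nlinarith
    have hll : l * (1 - l) ≤ 1 / 4 := by nlinarith [sq_nonneg (1 / 2 - l)]
    have key : l * (1 - l) * π ^ 2 ≤ 4 := by
      have := mul_le_mul hll hπsq hpi2.le (by norm_num : (0:ℝ) ≤ 1 / 4)
      linarith
    have key2 : l * (1 - l) * π ^ 2 * α ^ 2 ≤ 4 * α ^ 2 :=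
      mul_le_mul_of_nonneg_right key (sq_nonneg α)
    nlinarith [mul_nonneg hl0.le (sq_nonneg α)]
  have h5 : 1 - Real.cos (l * α) ≤ 2 * l / (1 - l) * (1 - Real.cos α) := by
    have hk : 0 ≤ 2 * l / (1 - l) := div_nonneg (by linarith) (by linarith)
    calc 1 - Real.cos (l * α) ≤ (l * α) ^ 2 / 2 := h2
      _ ≤ 2 * l / (1 - l) * (2 / π ^ 2 * α ^ 2) := h4
      _ ≤ 2 * l / (1 - l) * (1 - Real.cos α) := by
          exact mul_le_mul_of_nonneg_left h3 hk
  linarith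
end

section
/- For any λ ∈ (0, 1], the function x ↦ sin(λx/2)/(λ·sin(x/2)) is monotone increasing on (0, π/2). -/
open Real Set

/-! With `u = x / 2` the ratio is `sin (l * u) / (l * sin u)`, whose derivative has the sign of
`w u = l * cos (l * u) * sin u - sin (l * u) * cos u`. Since `w 0 = 0` and
`w' u = (1 - l ^ 2) * sin (l * u) * sin u ≥ 0` on `[0, π]` when `0 ≤ l ≤ 1`, `w` is nonnegative
there. -/

lemma hasDerivAt_sin_mul_div_sin {l u : ℝ} (hu : sin u ≠ 0) :
    HasDerivAt (fun u => sin (l * u) / sin u)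
      ((l * cos (l * u) * sin u - sin (l * u) * cos u) / sin u ^ 2) u := by
  have hlu : HasDerivAt (fun u => l * u) l u := by simpa using (hasDerivAt_id u).const_mul l
  exact hlu.sin.div (hasDerivAt_sin u) hu |>.congr_deriv (by ring)

lemma hasDerivAt_mul_cos_mul_sin_sub_sin_mul_cos (l u : ℝ) :
    HasDerivAt (fun u => l * cos (l * u) * sin u - sin (l * u) * cos u)
      ((1 - l ^ 2) * sin (l * u) * sin u) u := by
  have hlu : HasDerivAt (fun u => l * u) l u := by simpa using (hasDerivAt_id u).const_mul l
  exact ((hlu.cos.const_mul l).mul (hasDerivAt_sin u)).sub (hlu.sin.mul (hasDerivAt_cos u))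
    |>.congr_deriv (by ring)

lemma sin_mul_mul_cos_le_mul_cos_mul_mul_sin {l u : ℝ} (hl₀ : 0 ≤ l) (hl₁ : l ≤ 1)
    (hu₀ : 0 ≤ u) (huπ : u ≤ π) :
    sin (l * u) * cos u ≤ l * cos (l * u) * sin u := by
  have hmono : MonotoneOn (fun u => l * cos (l * u) * sin u - sin (l * u) * cos u) (Icc 0 π) := by
    refine monotoneOn_of_hasDerivWithinAt_nonneg (convex_Icc 0 π) (by fun_prop)
      (fun v _ => (hasDerivAt_mul_cos_mul_sin_sub_sin_mul_cos l v).hasDerivWithinAt) ?_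
    rw [interior_Icc]
    rintro v ⟨hv₀, hvπ⟩
    have hlv : l * v ≤ π := by nlinarith
    have := sin_nonneg_of_nonneg_of_le_pi (mul_nonneg hl₀ hv₀.le) hlv
    have := sin_nonneg_of_nonneg_of_le_pi hv₀.le hvπ.le
    have : 0 ≤ 1 - l ^ 2 := by nlinarith
    positivity
  simpa using hmono (left_mem_Icc.2 pi_nonneg) ⟨hu₀, huπ⟩ hu₀

theorem monotoneOn_sin_mul_div_sin {l : ℝ} (hl₀ : 0 ≤ l) (hl₁ : l ≤ 1) :
    MonotoneOn (fun u => sin (l * u) / sin u) (Ioo 0 π) := by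
  have hsin : ∀ u ∈ Ioo 0 π, sin u ≠ 0 := fun u hu => (sin_pos_of_pos_of_lt_pi hu.1 hu.2).ne'
  have hderiv := fun u hu => hasDerivAt_sin_mul_div_sin (l := l) (hsin u hu)
  refine monotoneOn_of_hasDerivWithinAt_nonneg (convex_Ioo 0 π)
    (fun u hu => (hderiv u hu).continuousAt.continuousWithinAt)
    (fun u hu => (hderiv u (interior_subset hu)).hasDerivWithinAt) ?_
  rw [interior_Ioo]
  rintro u ⟨hu₀, huπ⟩
  have := sin_mul_mul_cos_le_mul_cos_mul_mul_sin hl₀ hl₁ hu₀.le huπ.le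
  exact div_nonneg (sub_nonneg.2 this) (sq_nonneg _)

/-- For `λ ∈ (0,1]`, the function `x ↦ sin(λx/2)/(λ sin(x/2))` is
monotone increasing on `(0, π/2)`. -/
theorem monotoneOn_sin_ratio (l : ℝ) (hl : l ∈ Set.Ioc (0 : ℝ) 1) :
    MonotoneOn (fun x => Real.sin (l * x / 2) / (l * Real.sin (x / 2)))
      (Set.Ioo 0 (π / 2)) := by
  obtain ⟨hl₀, hl₁⟩ := hl
  intro x hx y hy hxy
  have hhalf : ∀ z ∈ Ioo 0 (π / 2), z / 2 ∈ Ioo 0 π := fun z hz =>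
    ⟨by linarith [hz.1], by linarith [hz.2, pi_pos]⟩
  have := monotoneOn_sin_mul_div_sin hl₀.le hl₁ (hhalf x hx) (hhalf y hy) (by linarith)
  simp only [mul_div_assoc, div_mul_eq_div_div_swap] at this ⊢
  exact div_le_div_of_nonneg_right this hl₀.le
end

section
/- Let p₀, p₁ be probability densities on (S, ν) with Hellinger affinity ρ(p₀,p₁) = ∫√(p₀p₁) dν = cos α, α ∈ (0, π/2), λ ∈ (0,1/4), and p₂ = (a√p₁ + b√p₀)² with a = sin((1−λ)α)/sin α, b = sin(λα)/sin α. Then ∫ √(p₀/p₂) · p₁ dν ≤ sin(α)·cos(α) / (sin(λα)·cos(α) + sin((1−λ)α)) = cos(α)/cos(λα). -/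
open MeasureTheory Real


theorem T0_aux (sa A B c x y : ℝ) (hsa : 0 ≤ sa) (hA : 0 ≤ A) (hB : 0 ≤ B)
    (hx : 0 ≤ x) (hy : 0 ≤ y) (hABc : 0 < A + B * c) :
    sa * x * y ^ 2 / (A * y + B * x)
      ≤ sa / (A + B * c) ^ 2 * (A * (x * y) + B * c ^ 2 * y ^ 2) := by
  rcases eq_or_lt_of_le (by positivity : (0:ℝ) ≤ A * y + B * x) with hD | hD
  · rw [← hD, div_zero]
    positivity
  · rw [div_le_iff₀ hD, div_mul_eq_mul_div, div_mul_eq_mul_div,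
      le_div_iff₀ (by positivity : (0:ℝ) < (A + B * c) ^ 2)]
    have key : sa * (A * (x * y) + B * c ^ 2 * y ^ 2) * (A * y + B * x)
        - sa * x * y ^ 2 * (A + B * c) ^ 2
        = sa * A * B * y * (x - c * y) ^ 2 := by ring
    have hnn : 0 ≤ sa * A * B * y * (x - c * y) ^ 2 :=
      mul_nonneg (mul_nonneg (mul_nonneg (mul_nonneg hsa hA) hB) hy) (sq_nonneg _)
    linarith [key, hnn]

/-- Bound on `T₀ = ∫ √(p₀/p₂) p₁ dν` via Jensen's inequality, and the trigonometric
identity for the bound. -/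
theorem T0_bound
    {S : Type*} [MeasurableSpace S] (ν : Measure S)
    (p0 p1 : S → ℝ)
    (h0 : ∀ s, 0 ≤ p0 s) (h1 : ∀ s, 0 ≤ p1 s)
    (hi0 : Integrable p0 ν) (hi1 : Integrable p1 ν)
    (hm0 : ∫ s, p0 s ∂ν = 1) (hm1 : ∫ s, p1 s ∂ν = 1)
    (α l : ℝ) (hα : α ∈ Set.Ioo 0 (π / 2)) (hl : l ∈ Set.Ioo (0 : ℝ) (1 / 4))
    (haff : ∫ s, Real.sqrt (p0 s * p1 s) ∂ν = Real.cos α)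
    (p2 : S → ℝ)
    (hp2 : p2 = fun s =>
      (Real.sin ((1 - l) * α) / Real.sin α * Real.sqrt (p1 s)
        + Real.sin (l * α) / Real.sin α * Real.sqrt (p0 s)) ^ 2)
    (hint : Integrable (fun s => Real.sqrt (p0 s / p2 s) * p1 s) ν) :
    (∫ s, Real.sqrt (p0 s / p2 s) * p1 s ∂ν
        ≤ Real.sin α * Real.cos α
            / (Real.sin (l * α) * Real.cos α + Real.sin ((1 - l) * α))) ∧
    Real.sin α * Real.cos α / (Real.sin (l * α) * Real.cos α + Real.sin ((1 - l) * α))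
      = Real.cos α / Real.cos (l * α) := by
  obtain ⟨hα0, hα2⟩ := hα
  obtain ⟨hl0, hl4⟩ := hl
  have hπ := Real.pi_pos
  set A := Real.sin ((1 - l) * α) with hAdef
  set B := Real.sin (l * α) with hBdef
  set c := Real.cos α with hcdef
  have hsα : 0 < Real.sin α := Real.sin_pos_of_pos_of_lt_pi hα0 (by linarith)
  have hlα0 : 0 < l * α := mul_pos hl0 hα0
  have hlα2 : l * α < π / 2 := by nlinarith
  have hB0 : 0 < B := Real.sin_pos_of_pos_of_lt_pi hlα0 (by linarith)
  have h1l0 : 0 < (1 - l) * α := by nlinarith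
  have h1l2 : (1 - l) * α < π / 2 := by nlinarith
  have hA0 : 0 < A := Real.sin_pos_of_pos_of_lt_pi h1l0 (by linarith)
  have hc0 : 0 < c := Real.cos_pos_of_mem_Ioo ⟨by linarith, hα2⟩
  have hclα : 0 < Real.cos (l * α) := Real.cos_pos_of_mem_Ioo ⟨by linarith, hlα2⟩
  have hD0 : 0 < A + B * c := by positivity
  -- pointwise rewrite of the sqrt
  have hsqrt : ∀ s, Real.sqrt (p0 s / p2 s) * p1 s
      = Real.sin α * Real.sqrt (p0 s) * p1 s
          / (A * Real.sqrt (p1 s) + B * Real.sqrt (p0 s)) := by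
    intro s
    simp only [hp2]
    set x := Real.sqrt (p0 s) with hx
    set y := Real.sqrt (p1 s) with hy
    have hx0 : 0 ≤ x := Real.sqrt_nonneg _
    have hy0 : 0 ≤ y := Real.sqrt_nonneg _
    have e1 : A / Real.sin α * y + B / Real.sin α * x = (A * y + B * x) / Real.sin α := by
      ring
    rw [e1, Real.sqrt_div (h0 s), Real.sqrt_sq (by positivity), ← hx,
      div_div_eq_mul_div]
    ring
  -- pointwise bound (tangent line to the concave function)
  have hg : ∀ s, Real.sqrt (p0 s / p2 s) * p1 s
      ≤ Real.sin α / (A + B * c) ^ 2 * (A * Real.sqrt (p0 s * p1 s) + B * c ^ 2 * p1 s) := by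
    intro s
    rw [hsqrt s]
    set x := Real.sqrt (p0 s) with hx
    set y := Real.sqrt (p1 s) with hy
    have hx0 : 0 ≤ x := Real.sqrt_nonneg _
    have hy0 : 0 ≤ y := Real.sqrt_nonneg _
    have hxy : Real.sqrt (p0 s * p1 s) = x * y := Real.sqrt_mul (h0 s) _
    have hp1y : p1 s = y ^ 2 := (Real.sq_sqrt (h1 s)).symm
    rw [hxy, hp1y]
    exact T0_aux (Real.sin α) A B c x y hsα.le hA0.le hB0.le hx0 hy0 hD0
  -- integrability of sqrt(p0*p1)
  have hmsqrt : AEStronglyMeasurable (fun s => Real.sqrt (p0 s * p1 s)) ν :=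
    Real.continuous_sqrt.comp_aestronglyMeasurable
      (hi0.aestronglyMeasurable.mul hi1.aestronglyMeasurable)
  have hintsqrt : Integrable (fun s => Real.sqrt (p0 s * p1 s)) ν := by
    refine (hi0.add hi1).mono' hmsqrt (Filter.Eventually.of_forall fun s => ?_)
    rw [Real.norm_eq_abs, abs_of_nonneg (Real.sqrt_nonneg _)]
    calc Real.sqrt (p0 s * p1 s) ≤ Real.sqrt ((p0 s + p1 s) ^ 2) := by
          apply Real.sqrt_le_sqrt; nlinarith [h0 s, h1 s, sq_nonneg (p0 s - p1 s)]
      _ = p0 s + p1 s := Real.sqrt_sq (by linarith [h0 s, h1 s])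
  have hgint : Integrable (fun s =>
      Real.sin α / (A + B * c) ^ 2 * (A * Real.sqrt (p0 s * p1 s) + B * c ^ 2 * p1 s)) ν :=
    ((hintsqrt.const_mul A).add (hi1.const_mul (B * c ^ 2))).const_mul _
  have hle := integral_mono hint hgint hg
  have hval : ∫ s, Real.sin α / (A + B * c) ^ 2
      * (A * Real.sqrt (p0 s * p1 s) + B * c ^ 2 * p1 s) ∂ν
      = Real.sin α / (A + B * c) ^ 2 * (A * c + B * c ^ 2) := by
    rw [integral_const_mul, integral_add (hintsqrt.const_mul A) (hi1.const_mul (B * c ^ 2)),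
      integral_const_mul, integral_const_mul, haff, hm1, mul_one]
  constructor
  · rw [hval] at hle
    refine hle.trans_eq ?_
    field_simp
    ring
  · -- trig identity
    have hA' : A = Real.sin α * Real.cos (l * α) - c * B := by
      rw [hAdef, hBdef, hcdef, show (1 - l) * α = α - l * α by ring, Real.sin_sub]
    rw [hA']
    rw [show B * c + (Real.sin α * Real.cos (l * α) - c * B)
        = Real.sin α * Real.cos (l * α) by ring]
    rw [mul_div_mul_left _ _ hsα.ne']
end

section
/- Let p₀, p₁ be probability densities on (S,ν), λ ∈ (0,1/4), α ∈ (0,π/2) with ∫√(p₀p₁)dν = cos α, and p₂ = (a√p₁ + b√p₀)² with a = sin((1−λ)α)/sin α, b = sin(λα)/sin α. Then ∫√(p₂ p₀) dν = 1 − h²(p₀,p₂) where h²(p₀,p₂) = 1 − cos((1−λ)α); in particular ∫ √(p₂/p₀)·p₀ dν = ∫√(p₂p₀)dν = cos((1−λ)α) ≤ exp(−(1−λ)²·(1−cos α)). -/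
open MeasureTheory Real

set_option maxHeartbeats 1000000

private lemma cos_half_sq (x : ℝ) : Real.cos x = 1 - 2 * Real.sin (x / 2) ^ 2 := by
  have h1 := Real.cos_sq (x / 2)
  have h2 := Real.sin_sq_add_cos_sq (x / 2)
  rw [(by ring : 2 * (x / 2) = x)] at h1
  linarith

private lemma trig_sum (u v : ℝ) :
    Real.sin u ^ 2 + Real.sin v ^ 2 + 2 * Real.sin u * Real.sin v * Real.cos (u + v)
      = Real.sin (u + v) ^ 2 := by
  rw [Real.sin_add, Real.cos_add]
  nlinarith [Real.sin_sq_add_cos_sq u, Real.sin_sq_add_cos_sq v]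

/-- Hellinger affinity identity for `(p₀, p₂)`, the value of `h²(p₀,p₂)`, and the
exponential bound `cos((1-λ)α) ≤ exp(-(1-λ)²(1-cos α))`. -/
theorem affinity_identity_and_exp_bound
    {S : Type*} [MeasurableSpace S] (ν : Measure S)
    (p0 p1 : S → ℝ)
    (h0 : ∀ s, 0 ≤ p0 s) (h1 : ∀ s, 0 ≤ p1 s)
    (hi0 : Integrable p0 ν) (hi1 : Integrable p1 ν)
    (hm0 : ∫ s, p0 s ∂ν = 1) (hm1 : ∫ s, p1 s ∂ν = 1)
    (α l : ℝ) (hα : α ∈ Set.Ioo 0 (π / 2)) (hl : l ∈ Set.Ioo (0 : ℝ) (1 / 4))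
    (haff : ∫ s, Real.sqrt (p0 s * p1 s) ∂ν = Real.cos α)
    (p2 : S → ℝ)
    (hp2 : p2 = fun s =>
      (Real.sin ((1 - l) * α) / Real.sin α * Real.sqrt (p1 s)
        + Real.sin (l * α) / Real.sin α * Real.sqrt (p0 s)) ^ 2) :
    (∫ s, Real.sqrt (p2 s * p0 s) ∂ν
        = 1 - (1 / 2) * ∫ s, (Real.sqrt (p0 s) - Real.sqrt (p2 s)) ^ 2 ∂ν) ∧
    (1 / 2) * (∫ s, (Real.sqrt (p0 s) - Real.sqrt (p2 s)) ^ 2 ∂ν)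
        = 1 - Real.cos ((1 - l) * α) ∧
    Real.cos ((1 - l) * α) ≤ Real.exp (-((1 - l) ^ 2 * (1 - Real.cos α))) := by
  obtain ⟨hα0, hαπ⟩ := hα
  obtain ⟨hl0, hl4⟩ := hl
  have hπ : (0 : ℝ) < π := Real.pi_pos
  have hsinα : 0 < Real.sin α := Real.sin_pos_of_pos_of_lt_pi hα0 (by linarith)
  set a : ℝ := Real.sin ((1 - l) * α) / Real.sin α with ha_def
  set b : ℝ := Real.sin (l * α) / Real.sin α with hb_def
  have hu0 : 0 < (1 - l) * α := by nlinarith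
  have huπ : (1 - l) * α < π := by nlinarith
  have hv0 : 0 < l * α := by nlinarith
  have hvπ : l * α < π := by nlinarith
  have ha : 0 ≤ a := div_nonneg (Real.sin_nonneg_of_nonneg_of_le_pi hu0.le huπ.le) hsinα.le
  have hb : 0 ≤ b := div_nonneg (Real.sin_nonneg_of_nonneg_of_le_pi hv0.le hvπ.le) hsinα.le
  -- p2 nonneg
  have h2 : ∀ s, 0 ≤ p2 s := by intro s; rw [hp2]; positivity
  -- sqrt of p2
  have hsq2 : ∀ s, Real.sqrt (p2 s) = a * Real.sqrt (p1 s) + b * Real.sqrt (p0 s) := by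
    intro s
    rw [hp2]
    exact Real.sqrt_sq (by positivity)
  -- trig identities
  have hab : a * Real.cos α + b = Real.cos ((1 - l) * α) := by
    rw [ha_def, hb_def]
    have hv : l * α = α - (1 - l) * α := by ring
    rw [hv, Real.sin_sub]
    field_simp
    ring
  have hsum : a ^ 2 + b ^ 2 + 2 * a * b * Real.cos α = 1 := by
    have htrig := trig_sum ((1 - l) * α) (l * α)
    have hαeq : (1 - l) * α + l * α = α := by ring
    rw [hαeq] at htrig
    rw [ha_def, hb_def]
    field_simp
    nlinarith [htrig]
  -- measurability
  have hms0 : AEStronglyMeasurable (fun s => Real.sqrt (p0 s)) ν :=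
    Real.continuous_sqrt.comp_aestronglyMeasurable hi0.1
  have hms1 : AEStronglyMeasurable (fun s => Real.sqrt (p1 s)) ν :=
    Real.continuous_sqrt.comp_aestronglyMeasurable hi1.1
  -- integrability of sqrt(p0 p1)
  have hI01 : Integrable (fun s => Real.sqrt (p0 s * p1 s)) ν := by
    have hmeas : AEStronglyMeasurable (fun s => Real.sqrt (p0 s * p1 s)) ν :=
      Real.continuous_sqrt.comp_aestronglyMeasurable (hi0.1.mul hi1.1)
    refine ((hi0.add hi1).div_const 2).mono hmeas (Filter.Eventually.of_forall fun s => ?_)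
    have hx := Real.sqrt_nonneg (p0 s * p1 s)
    have h01 : Real.sqrt (p0 s * p1 s) = Real.sqrt (p0 s) * Real.sqrt (p1 s) :=
      Real.sqrt_mul (h0 s) _
    have hs0 := Real.sq_sqrt (h0 s)
    have hs1 := Real.sq_sqrt (h1 s)
    rw [Real.norm_eq_abs, Real.norm_eq_abs, abs_of_nonneg hx]
    rw [h01]
    have key : Real.sqrt (p0 s) * Real.sqrt (p1 s) ≤ (p0 s + p1 s) / 2 := by
      nlinarith [sq_nonneg (Real.sqrt (p0 s) - Real.sqrt (p1 s))]
    calc Real.sqrt (p0 s) * Real.sqrt (p1 s) ≤ (p0 s + p1 s) / 2 := key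
      _ ≤ |(p0 s + p1 s) / 2| := le_abs_self _
  -- p2 expansion
  have hp2' : p2 = fun s => a ^ 2 * p1 s + b ^ 2 * p0 s
      + 2 * (a * b) * Real.sqrt (p0 s * p1 s) := by
    funext s
    rw [hp2]
    simp only
    rw [Real.sqrt_mul (h0 s)]
    linear_combination a ^ 2 * Real.sq_sqrt (h1 s) + b ^ 2 * Real.sq_sqrt (h0 s)
  have hi2 : Integrable p2 ν := by
    rw [hp2']
    exact ((hi1.const_mul _).add (hi0.const_mul _)).add (hI01.const_mul _)
  have hiA : Integrable (fun s => a ^ 2 * p1 s + b ^ 2 * p0 s) ν :=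
    (hi1.const_mul _).add (hi0.const_mul _)
  have hiB : Integrable (fun s => 2 * (a * b) * Real.sqrt (p0 s * p1 s)) ν :=
    hI01.const_mul _
  have hIp2 : ∫ s, p2 s ∂ν = 1 := by
    rw [hp2']
    rw [integral_add hiA hiB, integral_add (hi1.const_mul _) (hi0.const_mul _),
        integral_const_mul, integral_const_mul, integral_const_mul, hm0, hm1, haff]
    linarith [hsum]
  -- sqrt(p2 p0) expansion
  have hsp20 : (fun s => Real.sqrt (p2 s * p0 s))
      = fun s => a * Real.sqrt (p0 s * p1 s) + b * p0 s := by
    funext s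
    rw [Real.sqrt_mul (h2 s), hsq2 s, Real.sqrt_mul (h0 s)]
    have hs0 := Real.sq_sqrt (h0 s)
    nlinarith [Real.sqrt_nonneg (p0 s), Real.sqrt_nonneg (p1 s)]
  have hI20 : Integrable (fun s => Real.sqrt (p2 s * p0 s)) ν := by
    rw [hsp20]
    exact (hI01.const_mul _).add (hi0.const_mul _)
  have hint20 : ∫ s, Real.sqrt (p2 s * p0 s) ∂ν = Real.cos ((1 - l) * α) := by
    have hiC : Integrable (fun s => a * Real.sqrt (p0 s * p1 s)) ν := hI01.const_mul _
    have hiD : Integrable (fun s => b * p0 s) ν := hi0.const_mul _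
    rw [hsp20, integral_add hiC hiD, integral_const_mul, integral_const_mul, haff, hm0]
    linarith [hab]
  -- Hellinger expansion
  have hhell : (fun s => (Real.sqrt (p0 s) - Real.sqrt (p2 s)) ^ 2)
      = fun s => p0 s + p2 s - 2 * Real.sqrt (p2 s * p0 s) := by
    funext s
    rw [Real.sqrt_mul (h2 s)]
    linear_combination Real.sq_sqrt (h0 s) + Real.sq_sqrt (h2 s)
  have hinthell : ∫ s, (Real.sqrt (p0 s) - Real.sqrt (p2 s)) ^ 2 ∂ν
      = 2 - 2 * Real.cos ((1 - l) * α) := by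
    have hiE : Integrable (fun s => p0 s + p2 s) ν := hi0.add hi2
    have hiF : Integrable (fun s => 2 * Real.sqrt (p2 s * p0 s)) ν := hI20.const_mul _
    rw [hhell, integral_sub hiE hiF, integral_add hi0 hi2, integral_const_mul,
        hm0, hIp2, hint20]
    ring
  refine ⟨?_, ?_, ?_⟩
  · rw [hint20, hinthell]; ring
  · rw [hinthell]; ring
  · -- concavity of sin
    have hc := strictConcaveOn_sin_Icc.concaveOn.2 (x := α / 2) (y := 0)
      ⟨by linarith, by linarith⟩ ⟨le_refl 0, hπ.le⟩ (by linarith : (0:ℝ) ≤ 1 - l)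
      hl0.le (by ring)
    simp only [smul_eq_mul, mul_zero, add_zero, Real.sin_zero] at hc
    have hsin : (1 - l) * Real.sin (α / 2) ≤ Real.sin ((1 - l) * (α / 2)) := by linarith
    have hcos1 := cos_half_sq ((1 - l) * α)
    have hcos2 := cos_half_sq α
    have heq : ((1 - l) * α) / 2 = (1 - l) * (α / 2) := by ring
    rw [heq] at hcos1
    have hs2 : 0 ≤ Real.sin (α / 2) :=
      Real.sin_nonneg_of_nonneg_of_le_pi (by linarith) (by linarith)
    have hle : ((1 - l) * Real.sin (α / 2)) ^ 2 ≤ Real.sin ((1 - l) * (α / 2)) ^ 2 :=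
      pow_le_pow_left₀ (mul_nonneg (by linarith) hs2) hsin 2
    have h3 : (1 - l) ^ 2 * (1 - Real.cos α) = 2 * ((1 - l) * Real.sin (α / 2)) ^ 2 := by
      rw [hcos2]; ring
    have hbound : Real.cos ((1 - l) * α) ≤ 1 - (1 - l) ^ 2 * (1 - Real.cos α) := by
      linarith [hle, h3, hcos1]
    have hexp := Real.add_one_le_exp (-((1 - l) ^ 2 * (1 - Real.cos α)))
    linarith
end
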